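/- Let a, b and n > 1 be positive integers, set a_m = r_b(n) + a·r_b(m-1) for 1 ≤ m ≤ n, let k be a field, and let φ : k[x_1,…,x_n] → k[t] be the k-algebra homomorphism sending x_m to t^{a_m}. Then every 2×2 minor of the matrix X lies in I = ker φ: for 1 ≤ j < k ≤ n-1 one has φ(x_{j+1}·x_k^b − x_j^b·x_{k+1}) = 0, and for 1 ≤ l ≤ n-1 one has φ(x_{l+1}·x_n^b − x_1^{a+1}·x_l^b) = 0. Consequently I_2(X) ⊆ I. -/
import Mathlib


/-- The ℓ-th repunit in base `b`: `r_b(ℓ) = ∑_{j=0}^{ℓ-1} b^j`, with `r_b(0) = 0`. -/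
def rep (b ℓ : ℕ) : ℕ := ∑ j ∈ Finset.range ℓ, b ^ j

/-- `a_m = r_b(n) + a · r_b(m-1)`. -/
def aseq (a b n m : ℕ) : ℕ := rep b n + a * rep b (m - 1)

/-- The variable `x_m` (1-indexed, `1 ≤ m ≤ n`) of `K[x_1, …, x_n]`. -/
noncomputable def xv (K : Type*) [Field K] (n m : ℕ) : MvPolynomial (Fin n) K :=
  if h : m - 1 < n then MvPolynomial.X ⟨m - 1, h⟩ else 0

/-- The set of 2×2 minors of the matrix `X` with rows `(x_1^b, …, x_{n-1}^b, x_n^b)` and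
`(x_2, …, x_n, x_1^{a+1})`: the binomials `x_{j+1}·x_l^b − x_j^b·x_{l+1}` for
`1 ≤ j < l ≤ n-1` together with `x_{l+1}·x_n^b − x_1^{a+1}·x_l^b` for `1 ≤ l ≤ n-1`. -/
def minorsX (K : Type*) [Field K] (a b n : ℕ) : Set (MvPolynomial (Fin n) K) :=
  { f | (∃ j l : ℕ, 1 ≤ j ∧ j < l ∧ l ≤ n - 1 ∧
          f = xv K n (j + 1) * xv K n l ^ b - xv K n j ^ b * xv K n (l + 1)) ∨
        (∃ l : ℕ, 1 ≤ l ∧ l ≤ n - 1 ∧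
          f = xv K n (l + 1) * xv K n n ^ b - xv K n 1 ^ (a + 1) * xv K n l ^ b) }

/-- The `K`-algebra homomorphism `φ : K[x_1,…,x_n] → K[t]`, `x_m ↦ t^{a_m}`. -/
noncomputable def φmap (K : Type*) [Field K] (a b n : ℕ) :
    MvPolynomial (Fin n) K →ₐ[K] Polynomial K :=
  MvPolynomial.aeval fun m : Fin n => Polynomial.X ^ aseq a b n ((m : ℕ) + 1)

lemma rep_succ (b k : ℕ) : rep b (k + 1) = 1 + b * rep b k := by
  simp [rep, Finset.sum_range_succ', pow_succ', Finset.mul_sum, add_comm]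

lemma phi_xv {K : Type*} [Field K] (a b n m : ℕ) (hm : 1 ≤ m) (hmn : m ≤ n) :
    φmap K a b n (xv K n m) = Polynomial.X ^ aseq a b n m := by
  have h : m - 1 < n := by omega
  rw [xv, dif_pos h, φmap, MvPolynomial.aeval_X]
  rfl

lemma key (a b n m : ℕ) (hm : 1 ≤ m) :
    aseq a b n (m + 1) + b * rep b n = b * aseq a b n m + (rep b n + a) := by
  have h1 : rep b m = 1 + b * rep b (m - 1) := by
    obtain ⟨k, rfl⟩ : ∃ k, m = k + 1 := ⟨m - 1, by omega⟩
    simpa using rep_succ b k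
  simp only [aseq, Nat.add_sub_cancel]
  rw [h1]; ring

lemma exp1 (a b n j l : ℕ) (hj : 1 ≤ j) (hl : 1 ≤ l) :
    aseq a b n (j + 1) + aseq a b n l * b = aseq a b n j * b + aseq a b n (l + 1) := by
  have k1 := key a b n j hj
  have k2 := key a b n l hl
  have e1 : aseq a b n l * b = b * aseq a b n l := mul_comm _ _
  have e2 : aseq a b n j * b = b * aseq a b n j := mul_comm _ _
  rw [e1, e2]; omega

lemma exp2 (a b n l : ℕ) (hl : 1 ≤ l) (hn : 1 ≤ n) :
    aseq a b n (l + 1) + aseq a b n n * b = aseq a b n 1 * (a + 1) + aseq a b n l * b := by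
  have k1 := key a b n l hl
  have k2 := key a b n n hn
  have h3 : aseq a b n (n + 1) = (a + 1) * aseq a b n 1 := by
    simp only [aseq, Nat.add_sub_cancel, Nat.sub_self, rep]
    simp; ring
  have e1 : aseq a b n n * b = b * aseq a b n n := mul_comm _ _
  have e2 : aseq a b n l * b = b * aseq a b n l := mul_comm _ _
  have e3 : aseq a b n 1 * (a + 1) = (a + 1) * aseq a b n 1 := mul_comm _ _
  rw [e1, e2, e3]; omega

theorem stmt12 (a b n : ℕ) (ha : 0 < a) (hb : 0 < b) (hn : 1 < n) (K : Type*) [Field K] :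
    (∀ j l : ℕ, 1 ≤ j → j < l → l ≤ n - 1 →
        φmap K a b n (xv K n (j + 1) * xv K n l ^ b - xv K n j ^ b * xv K n (l + 1)) = 0) ∧
      (∀ l : ℕ, 1 ≤ l → l ≤ n - 1 →
        φmap K a b n (xv K n (l + 1) * xv K n n ^ b - xv K n 1 ^ (a + 1) * xv K n l ^ b) = 0) ∧
      Ideal.span (minorsX K a b n) ≤ RingHom.ker (φmap K a b n) := by
  have main1 : ∀ j l : ℕ, 1 ≤ j → j < l → l ≤ n - 1 →
      φmap K a b n (xv K n (j + 1) * xv K n l ^ b - xv K n j ^ b * xv K n (l + 1)) = 0 := by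
    intro j l hj hjl hl
    rw [map_sub, map_mul, map_mul, map_pow, map_pow,
      phi_xv a b n (j+1) (by omega) (by omega), phi_xv a b n l (by omega) (by omega),
      phi_xv a b n j (by omega) (by omega), phi_xv a b n (l+1) (by omega) (by omega),
      ← pow_mul, ← pow_mul, ← pow_add, ← pow_add, exp1 a b n j l hj (by omega), sub_self]
  have main2 : ∀ l : ℕ, 1 ≤ l → l ≤ n - 1 →
      φmap K a b n (xv K n (l + 1) * xv K n n ^ b - xv K n 1 ^ (a + 1) * xv K n l ^ b) = 0 := by
    intro l hl1 hl2
    rw [map_sub, map_mul, map_mul, map_pow, map_pow, map_pow,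
      phi_xv a b n (l+1) (by omega) (by omega), phi_xv a b n n (by omega) (by omega),
      phi_xv a b n 1 (by omega) (by omega), phi_xv a b n l (by omega) (by omega),
      ← pow_mul, ← pow_mul, ← pow_mul, ← pow_add, ← pow_add,
      exp2 a b n l hl1 (by omega), sub_self]
  refine ⟨main1, main2, ?_⟩
  rw [Ideal.span_le]
  rintro f (⟨j, l, hj, hjl, hl, rfl⟩ | ⟨l, hl1, hl2, rfl⟩)
  · exact RingHom.mem_ker.mpr (main1 j l hj hjl hl)
  · exact RingHom.mem_ker.mpr (main2 l hl1 hl2)
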